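/- Let A be a commutative group, X a commutative partial monoid, i : A → X an injective homomorphism with the action l_A : (a,x) ↦ i(a)+x totally defined. Then the maps φ ↦ proj₁ ∘ φ and s ↦ ⟨s, π⟩ define a bijective correspondence between trivialisations φ : X → A × X/A and left splittings s : X → A (homomorphisms with s ∘ i = id_A). -/

import Mathlib

/-- A commutative partial monoid: addition is partially defined (via `Option`),
commutative, unital, and associative where defined. -/
structure PCM (X : Type*) where
  add : X → X → Option X
  zero : X
  comm : ∀ x y, add x y = add y x
  zero_add : ∀ x, add zero x = some x
  assoc : ∀ x y z xy yz, add x y = some xy → add y z = some yz →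
    add xy z = add x yz

/-- Homomorphism of commutative partial monoids. -/
def PCM.IsHom {X Y : Type*} (MX : PCM X) (MY : PCM Y) (f : X → Y) : Prop :=
  f MX.zero = MY.zero ∧
  ∀ x y z, MX.add x y = some z → MY.add (f x) (f y) = some (f z)

/-- `i : A → X` is an injective homomorphism of the group `A` into the
partial monoid `X` such that `i a + x` is always defined. -/
structure EmbedData {A X : Type*} [AddCommGroup A] (MX : PCM X) (i : A → X) : Prop where
  inj : Function.Injective i
  map_zero : i 0 = MX.zero
  map_add : ∀ a b, MX.add (i a) (i b) = some (i (a + b))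
  total : ∀ a x, (MX.add (i a) x).isSome

/-- The action `l_A : (a, x) ↦ i a + x` is free. -/
def FreeAction {A X : Type*} [AddCommGroup A] (MX : PCM X) (i : A → X) : Prop :=
  ∀ a a' x y, MX.add (i a) x = some y → MX.add (i a') x = some y → a = a'

/-- `π : X → Q` presents `Q` as the orbit space `X/A` of the action of `A` on `X`
via `i`, with the induced partial monoid structure. -/
structure QuotData {A X Q : Type*} [AddCommGroup A] (MX : PCM X) (MQ : PCM Q)
    (i : A → X) (π : X → Q) : Prop where
  surj : Function.Surjective π
  orbit : ∀ x y, π x = π y ↔ ∃ a, MX.add (i a) x = some y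
  hom : MX.IsHom MQ π
  lift : ∀ x y q, MQ.add (π x) (π y) = some q → (MX.add x y).isSome

/-- A left splitting of `A → X → X/A`: a homomorphism `s : X → A` with `s ∘ i = id`. -/
def IsLeftSplit {A X : Type*} [AddCommGroup A] (MX : PCM X) (i : A → X) (s : X → A) : Prop :=
  s MX.zero = 0 ∧
  (∀ x y z, MX.add x y = some z → s z = s x + s y) ∧
  (∀ a, s (i a) = a)

/-- A right splitting of `A → X → X/A`: a homomorphism `h : X/A → X` with `π ∘ h = id`. -/
def IsRightSplit {X Q : Type*} (MX : PCM X) (MQ : PCM Q)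
    (π : X → Q) (h : Q → X) : Prop :=
  MQ.IsHom MX h ∧ ∀ q, π (h q) = q

/-- A trivialisation `φ : X → A × X/A`: a homomorphism (into the product
partial monoid) with `φ ∘ i = in₁` and `proj₂ ∘ φ = π`. -/
def IsTriv {A X Q : Type*} [AddCommGroup A] (MX : PCM X) (MQ : PCM Q)
    (i : A → X) (π : X → Q) (φ : X → A × Q) : Prop :=
  φ MX.zero = (0, MQ.zero) ∧
  (∀ x y z, MX.add x y = some z →
    MQ.add (φ x).2 (φ y).2 = some (φ z).2 ∧ (φ z).1 = (φ x).1 + (φ y).1) ∧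
  (∀ a, φ (i a) = (a, MQ.zero)) ∧
  (∀ x, (φ x).2 = π x)

/-- A local trivialisation `φ : C → A × C/A` of the restriction of the sequence
to a submonoid `i(A) ⊆ C ⊆ X` (presented as a function on all of `X` whose
values off `C` are irrelevant). -/
def IsLocalTriv {A X Q : Type*} [AddCommGroup A] (MX : PCM X) (MQ : PCM Q)
    (i : A → X) (π : X → Q) (C : Set X) (φ : X → A × Q) : Prop :=
  (∀ x y z, x ∈ C → y ∈ C → MX.add x y = some z →
    MQ.add (φ x).2 (φ y).2 = some (φ z).2 ∧ (φ z).1 = (φ x).1 + (φ y).1) ∧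
  (∀ a, φ (i a) = (a, MQ.zero)) ∧
  (∀ x, x ∈ C → (φ x).2 = π x)

/-- `C` is a total submonoid of the partial monoid `X` containing `i(A)`. -/
def IsSubPCM {A X : Type*} [AddCommGroup A] (MX : PCM X) (i : A → X) (C : Set X) : Prop :=
  MX.zero ∈ C ∧
  (∀ a, i a ∈ C) ∧
  (∀ x y, x ∈ C → y ∈ C → (MX.add x y).isSome) ∧
  (∀ x y z, x ∈ C → y ∈ C → MX.add x y = some z → z ∈ C)

theorem PCM.add_zero {X : Type*} (MX : PCM X) (x : X) : MX.add x MX.zero = some x := by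
  rw [MX.comm]
  exact MX.zero_add x

section Splittings

variable {A X Q : Type*} [AddCommGroup A] {MX : PCM X} {MQ : PCM Q} {i : A → X} {π : X → Q}

/-- `i a = i a + 0` puts `i a` in the orbit of `0`. -/
theorem QuotData.map_embed (hquot : QuotData MX MQ i π) (a : A) : π (i a) = MQ.zero := by
  rw [← hquot.hom.1, (hquot.orbit MX.zero (i a)).2 ⟨a, MX.add_zero (i a)⟩]

theorem IsTriv.isLeftSplit_fst {φ : X → A × Q} (hφ : IsTriv MX MQ i π φ) :
    IsLeftSplit MX i (fun x => (φ x).1) := by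
  obtain ⟨h_zero, h_add, h_embed, -⟩ := hφ
  exact ⟨congrArg Prod.fst h_zero, fun x y z hxy => (h_add x y z hxy).2,
    fun a => congrArg Prod.fst (h_embed a)⟩

theorem IsLeftSplit.isTriv_prodMk {s : X → A} (hquot : QuotData MX MQ i π)
    (hs : IsLeftSplit MX i s) : IsTriv MX MQ i π (fun x => (s x, π x)) := by
  obtain ⟨h_zero, h_add, h_embed⟩ := hs
  exact ⟨Prod.ext h_zero hquot.hom.1, fun x y z hxy => ⟨hquot.hom.2 x y z hxy, h_add x y z hxy⟩,
    fun a => Prod.ext (h_embed a) (hquot.map_embed a), fun _ => rfl⟩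

theorem IsTriv.prodMk_fst {φ : X → A × Q} (hφ : IsTriv MX MQ i π φ) :
    (fun x => ((φ x).1, π x)) = φ :=
  funext fun x => Prod.ext rfl (hφ.2.2.2 x).symm

end Splittings

theorem trivialisations_biject_with_left_splittings_general {A X Q : Type*} [AddCommGroup A]
    (MX : PCM X) (MQ : PCM Q) (i : A → X) (π : X → Q)
    (hquot : QuotData MX MQ i π) :
    (∀ φ : X → A × Q, IsTriv MX MQ i π φ → IsLeftSplit MX i (fun x => (φ x).1)) ∧
    (∀ s : X → A, IsLeftSplit MX i s → IsTriv MX MQ i π (fun x => (s x, π x))) ∧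
    (∀ φ : X → A × Q, IsTriv MX MQ i π φ → (fun x => ((φ x).1, π x)) = φ) ∧
    (∀ s : X → A, IsLeftSplit MX i s → (fun x => ((s x, π x) : A × Q).1) = s) :=
  ⟨fun _ hφ => hφ.isLeftSplit_fst, fun _ hs => hs.isTriv_prodMk hquot,
    fun _ hφ => hφ.prodMk_fst, fun _ _ => rfl⟩

/-- The maps `φ ↦ proj₁ ∘ φ` and `s ↦ ⟨s, π⟩` are a bijective correspondence
between trivialisations `φ : X → A × X/A` and left splittings `s : X → A`. -/
theorem trivialisations_biject_with_left_splittings {A X Q : Type*} [AddCommGroup A]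
    (MX : PCM X) (MQ : PCM Q) (i : A → X) (π : X → Q)
    (hemb : EmbedData MX i) (hquot : QuotData MX MQ i π) :
    (∀ φ : X → A × Q, IsTriv MX MQ i π φ → IsLeftSplit MX i (fun x => (φ x).1)) ∧
    (∀ s : X → A, IsLeftSplit MX i s → IsTriv MX MQ i π (fun x => (s x, π x))) ∧
    (∀ φ : X → A × Q, IsTriv MX MQ i π φ → (fun x => ((φ x).1, π x)) = φ) ∧
    (∀ s : X → A, IsLeftSplit MX i s → (fun x => ((s x, π x) : A × Q).1) = s) :=
  trivialisations_biject_with_left_splittings_general MX MQ i π hquot
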